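/- Let L, M be positive integers, let Σ ∈ ℂ^{L×L} be a Hermitian positive definite matrix, let p ∈ ℂ^L, Ỹ ∈ ℂ^{L×M}, and let h̄ ∈ ℂ^M satisfy Σ_{m=1}^M |h̄_m|² = M. Let g > 0, κ > 0 and set γ = g/(1+κ), μ = √(gκ/(1+κ)). Define the real numbers α = γ·p^H Σ^{-1} p, β = (γ/M)·p^H Σ^{-1} Ỹ Ỹ^H Σ^{-1} p, and η = (2μ/M)·Re(h̄^T Ỹ^H Σ^{-1} p). Then for every real d with 1 + αd > 0, the matrix Σ + dγ p p^H is Hermitian positive definite and [log det(Σ + dγ p p^H) + (1/M)·tr((Σ + dγ p p^H)^{-1} (Ỹ − dμ p h̄^T)(Ỹ − dμ p h̄^T)^H)] − [log det(Σ) + (1/M)·tr(Σ^{-1} Ỹ Ỹ^H)] = log(1 + αd) + (καd² − (β+η)d)/(1 + αd), where both determinants are positive reals and all traces appearing are real. -/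

import Mathlib

/-!
Let `s = pᴴ A⁻¹ p`, so that `α = γ s`. The matrix determinant lemma gives
`det B = det A · (1 + αd)` and the Sherman–Morrison formula gives
`B⁻¹ = A⁻¹ - dγ / (1 + αd) · A⁻¹ p pᴴ A⁻¹`. For Hermitian `G`, `Re tr(G W Wᴴ)` expands into
`Re tr(G Y Yᴴ)`, `Re (h̄ᵀ Yᴴ G p)` and `pᴴ G p`; for `G = A⁻¹ p pᴴ A⁻¹` these are
`pᴴ A⁻¹ Y Yᴴ A⁻¹ p`, `s · Re (h̄ᵀ Yᴴ A⁻¹ p)` and `s²`. What remains is a rational identity in `d`,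
using `μ² = κγ`.
-/

open Matrix
open scoped ComplexOrder

namespace Matrix

variable {n m : Type*} [Fintype n] [Fintype m]

theorem det_add_smul_vecMulVec [DecidableEq n] {R : Type*} [CommRing R] {A : Matrix n n R}
    (hA : IsUnit A.det) (c : R) (u v : n → R) :
    (A + c • vecMulVec u v).det = A.det * (1 + c * (v ⬝ᵥ A⁻¹ *ᵥ u)) := by
  rw [← smul_vecMulVec, vecMulVec_eq Unit, det_add_replicateCol_mul_replicateRow hA]
  congr 1
  rw [det_unique, add_apply, one_apply_eq, Matrix.mul_assoc, ← replicateCol_mulVec,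
    replicateRow_mul_replicateCol_apply, mulVec_smul, dotProduct_smul, smul_eq_mul]

theorem inv_add_smul_vecMulVec [DecidableEq n] {K : Type*} [Field K] {A : Matrix n n K}
    (hA : IsUnit A.det) (c : K) (u v : n → K) (h : 1 + c * (v ⬝ᵥ A⁻¹ *ᵥ u) ≠ 0) :
    (A + c • vecMulVec u v)⁻¹ =
      A⁻¹ - (c / (1 + c * (v ⬝ᵥ A⁻¹ *ᵥ u))) • (A⁻¹ * vecMulVec u v * A⁻¹) := by
  refine inv_eq_right_inv ?_
  set s := v ⬝ᵥ A⁻¹ *ᵥ u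
  set P := vecMulVec u v
  have hPAP : P * A⁻¹ * P = s • P := by
    rw [Matrix.mul_assoc, mul_vecMulVec, vecMulVec_mul, vecMul_vecMulVec, vecMulVec_smul]
  have hAPA : A * (A⁻¹ * P * A⁻¹) = P * A⁻¹ := by
    rw [← Matrix.mul_assoc, ← Matrix.mul_assoc, mul_nonsing_inv _ hA, Matrix.one_mul]
  have hPPA : P * (A⁻¹ * P * A⁻¹) = s • (P * A⁻¹) := by
    rw [← Matrix.mul_assoc, ← Matrix.mul_assoc, hPAP, Matrix.smul_mul]
  have hcoeff : c - c / (1 + c * s) - c * (c / (1 + c * s)) * s = 0 := by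
    field_simp
    ring
  calc (A + c • P) * (A⁻¹ - (c / (1 + c * s)) • (A⁻¹ * P * A⁻¹))
      = 1 + (c - c / (1 + c * s) - c * (c / (1 + c * s)) * s) • (P * A⁻¹) := by
        rw [Matrix.add_mul, Matrix.mul_sub, Matrix.mul_sub, mul_nonsing_inv _ hA, Matrix.mul_smul,
          Matrix.smul_mul, Matrix.smul_mul, Matrix.mul_smul, hAPA, hPPA]
        module
    _ = 1 := by rw [hcoeff, zero_smul, add_zero]

theorem mul_vecMulVec_mul_mulVec {R : Type*} [CommSemiring R] {l : Type*}
    (X : Matrix l n R) (u : n → R) (v : m → R) (Z : Matrix m m R) (w : m → R) :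
    (X * vecMulVec u v * Z) *ᵥ w = (v ⬝ᵥ Z *ᵥ w) • X *ᵥ u := by
  rw [← mulVec_mulVec, ← mulVec_mulVec, vecMulVec_mulVec, op_smul_eq_smul, mulVec_smul]

theorem trace_mul_vecMulVec_mul {R : Type*} [CommSemiring R] (X : Matrix m n R) (u : n → R)
    (v : m → R) (Z : Matrix m m R) :
    trace (X * (vecMulVec u v * Z)) = v ⬝ᵥ (Z * X) *ᵥ u := by
  rw [trace_mul_comm, vecMulVec_mul, vecMulVec_mul, trace_vecMulVec, dotProduct_comm,
    vecMul_vecMul, ← dotProduct_mulVec]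

theorem PosSemidef.trace_mul_mul_conjTranspose_nonneg {R : Type*} [CommRing R] [PartialOrder R]
    [StarRing R] [StarOrderedRing R] {G : Matrix n n R} (hG : G.PosSemidef) (W : Matrix n m R) :
    0 ≤ trace (G * W * Wᴴ) := by
  rw [trace_mul_comm, ← Matrix.mul_assoc]
  exact (hG.conjTranspose_mul_mul_same W).trace_nonneg

variable {𝕜 : Type*} [RCLike 𝕜]

theorem IsHermitian.ofReal_re_star_dotProduct_mulVec_self {A : Matrix n n 𝕜}
    (hA : A.IsHermitian) (x : n → 𝕜) :
    (RCLike.re (star x ⬝ᵥ A *ᵥ x) : 𝕜) = star x ⬝ᵥ A *ᵥ x :=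
  RCLike.conj_eq_iff_re.mp (RCLike.conj_eq_iff_im.mpr (hA.im_star_dotProduct_mulVec_self x))

theorem PosSemidef.norm_dotProduct_mulVec_sq_le {A : Matrix n n 𝕜} (hA : A.PosSemidef)
    (x y : n → 𝕜) :
    ‖star x ⬝ᵥ A *ᵥ y‖ ^ 2 ≤
      RCLike.re (star x ⬝ᵥ A *ᵥ x) * RCLike.re (star y ⬝ᵥ A *ᵥ y) := by
  let := A.toSeminormedAddCommGroup hA
  let := A.toInnerProductSpace hA
  have h : ‖(A *ᵥ y) ⬝ᵥ star x‖ * ‖(A *ᵥ x) ⬝ᵥ star y‖ ≤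
      RCLike.re ((A *ᵥ x) ⬝ᵥ star x) * RCLike.re ((A *ᵥ y) ⬝ᵥ star y) :=
    inner_mul_inner_self_le (𝕜 := 𝕜) x y
  have hconj : (A *ᵥ x) ⬝ᵥ star y = star (star x ⬝ᵥ A *ᵥ y) := by
    rw [star_dotProduct, star_mulVec, star_star, hA.isHermitian.eq, ← dotProduct_mulVec,
      dotProduct_comm]
  rwa [hconj, norm_star, dotProduct_comm _ (star y), dotProduct_comm _ (star x),
    dotProduct_comm _ (star x), ← sq] at h

theorem star_dotProduct_vecMulVec_star_mulVec (p x : n → 𝕜) :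
    star x ⬝ᵥ vecMulVec p (star p) *ᵥ x = (‖star p ⬝ᵥ x‖ ^ 2 : ℝ) := by
  rw [vecMulVec_mulVec, dotProduct_smul, MulOpposite.smul_eq_mul_unop, MulOpposite.unop_op,
    star_dotProduct, RCLike.star_def, RCLike.conj_mul]
  norm_cast

/-- For `c < 0` this is Cauchy–Schwarz for the inner product of `A`:
`|pᴴ x|² = |(A⁻¹ p)ᴴ A x|² ≤ (pᴴ A⁻¹ p) (xᴴ A x)`. -/
theorem PosDef.add_smul_vecMulVec_star [DecidableEq n] {A : Matrix n n 𝕜} (hA : A.PosDef)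
    (p : n → 𝕜) {c : ℝ} (hc : 0 < 1 + c * RCLike.re (star p ⬝ᵥ A⁻¹ *ᵥ p)) :
    (A + (c : 𝕜) • vecMulVec p (star p)).PosDef := by
  refine .of_dotProduct_mulVec_pos (hA.isHermitian.add ?_) fun x hx ↦ ?_
  · exact (posSemidef_vecMulVec_self_star p).isHermitian.smul (RCLike.conj_ofReal c)
  have hAq : A *ᵥ (A⁻¹ *ᵥ p) = p := by
    rw [mulVec_mulVec, mul_nonsing_inv _ (A.isUnit_iff_isUnit_det.mp hA.isUnit), one_mulVec]
  have hcs : ‖star p ⬝ᵥ x‖ ^ 2 ≤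
      RCLike.re (star p ⬝ᵥ A⁻¹ *ᵥ p) * RCLike.re (star x ⬝ᵥ A *ᵥ x) := by
    have hpx : star p ⬝ᵥ x = star (A⁻¹ *ᵥ p) ⬝ᵥ A *ᵥ x := by
      conv_lhs => rw [← hAq, star_mulVec, hA.isHermitian.eq, ← dotProduct_mulVec]
    have hqq : RCLike.re (star (A⁻¹ *ᵥ p) ⬝ᵥ A *ᵥ (A⁻¹ *ᵥ p)) =
        RCLike.re (star p ⬝ᵥ A⁻¹ *ᵥ p) := by
      rw [hAq, star_dotProduct, RCLike.star_def, RCLike.conj_re]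
    simpa only [hpx, hqq] using hA.posSemidef.norm_dotProduct_mulVec_sq_le (A⁻¹ *ᵥ p) x
  have hax := hA.dotProduct_mulVec_pos hx
  rw [RCLike.pos_iff] at hax ⊢
  rw [add_mulVec, dotProduct_add, smul_mulVec, dotProduct_smul,
    star_dotProduct_vecMulVec_star_mulVec, smul_eq_mul, ← RCLike.ofReal_mul, map_add, map_add,
    RCLike.ofReal_re, RCLike.ofReal_im, hax.2, add_zero]
  refine ⟨?_, rfl⟩
  rcases le_or_gt 0 c with hc0 | hc0
  · nlinarith [hax.1]
  · nlinarith [mul_le_mul_of_nonpos_left hcs hc0.le, mul_pos hc hax.1]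

theorem IsHermitian.re_trace_mul_mul_conjTranspose_sub_smul_vecMulVec {G : Matrix n n 𝕜}
    (hG : G.IsHermitian) (Y : Matrix n m 𝕜) (p : n → 𝕜) (h : m → 𝕜) (e : ℝ) :
    RCLike.re (trace (G * (Y - (e : 𝕜) • vecMulVec p h) * (Y - (e : 𝕜) • vecMulVec p h)ᴴ)) =
      RCLike.re (trace (G * Y * Yᴴ)) - 2 * e * RCLike.re (h ⬝ᵥ (Yᴴ * G) *ᵥ p) +
        e ^ 2 * (∑ j, ‖h j‖ ^ 2) * RCLike.re (star p ⬝ᵥ G *ᵥ p) := by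
  set z := h ⬝ᵥ (Yᴴ * G) *ᵥ p
  have hcross : trace (G * Y * vecMulVec (star h) (star p)) = starRingEnd 𝕜 z := by
    rw [mul_vecMulVec, trace_vecMulVec, dotProduct_star, star_mulVec, conjTranspose_mul,
      hG.eq, star_star, dotProduct_comm, ← dotProduct_mulVec, RCLike.star_def]
  have hcross' : trace (G * vecMulVec p h * Yᴴ) = z := by
    rw [mul_vecMulVec, vecMulVec_mul, trace_vecMulVec, dotProduct_comm, ← dotProduct_mulVec,
      mulVec_mulVec]
  have hsq : trace (G * vecMulVec p h * vecMulVec (star h) (star p)) =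
      (h ⬝ᵥ star h) * (star p ⬝ᵥ G *ᵥ p) := by
    rw [Matrix.mul_assoc, vecMulVec_mul_vecMulVec, mul_vecMulVec, trace_vecMulVec,
      dotProduct_smul, smul_eq_mul, dotProduct_comm (G *ᵥ p)]
  have hh : h ⬝ᵥ star h = ((∑ j, ‖h j‖ ^ 2 : ℝ) : 𝕜) := by
    simp [dotProduct, RCLike.mul_conj]
  have hexp : trace (G * (Y - (e : 𝕜) • vecMulVec p h) * (Y - (e : 𝕜) • vecMulVec p h)ᴴ) =
      trace (G * Y * Yᴴ) - e * (starRingEnd 𝕜 z + z) +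
        e ^ 2 * (h ⬝ᵥ star h) * (star p ⬝ᵥ G *ᵥ p) := by
    rw [conjTranspose_sub, conjTranspose_smul, conjTranspose_vecMulVec, RCLike.star_def,
      RCLike.conj_ofReal]
    simp only [Matrix.mul_sub, Matrix.sub_mul, Matrix.mul_smul, Matrix.smul_mul, trace_sub,
      trace_smul, hcross, hcross', hsq, smul_eq_mul]
    ring
  rw [hexp, hh, ← RCLike.ofReal_pow, ← RCLike.ofReal_mul]
  simp only [map_add, map_sub, RCLike.re_ofReal_mul, RCLike.conj_re]
  ring

theorem IsHermitian.re_trace_inv_add_smul_vecMulVec_star_mul_mul_conjTranspose [DecidableEq n]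
    {A : Matrix n n 𝕜} (hA : A.IsHermitian) (hdet : IsUnit A.det) (p : n → 𝕜)
    (Y : Matrix n m 𝕜) (h : m → 𝕜) {c : ℝ} (e : ℝ)
    (hc : 1 + c * RCLike.re (star p ⬝ᵥ A⁻¹ *ᵥ p) ≠ 0) :
    RCLike.re (trace ((A + (c : 𝕜) • vecMulVec p (star p))⁻¹ *
        (Y - (e : 𝕜) • vecMulVec p h) * (Y - (e : 𝕜) • vecMulVec p h)ᴴ)) =
      RCLike.re (trace (A⁻¹ * Y * Yᴴ)) +
        (e ^ 2 * (∑ j, ‖h j‖ ^ 2) * RCLike.re (star p ⬝ᵥ A⁻¹ *ᵥ p) -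
            2 * e * RCLike.re (h ⬝ᵥ (Yᴴ * A⁻¹) *ᵥ p) -
            c * RCLike.re (star p ⬝ᵥ (A⁻¹ * Y * Yᴴ * A⁻¹) *ᵥ p)) /
          (1 + c * RCLike.re (star p ⬝ᵥ A⁻¹ *ᵥ p)) := by
  obtain ⟨s, hs⟩ : ∃ s : ℝ, star p ⬝ᵥ A⁻¹ *ᵥ p = s :=
    ⟨_, (hA.inv.ofReal_re_star_dotProduct_mulVec_self p).symm⟩
  rw [hs, RCLike.ofReal_re] at hc ⊢
  set K := A⁻¹ * vecMulVec p (star p) * A⁻¹ with hK_def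
  have hK : K.IsHermitian := by
    simpa only [hA.inv.eq] using
      isHermitian_conjTranspose_mul_mul A⁻¹ (posSemidef_vecMulVec_self_star p).isHermitian
  have hKp : K *ᵥ p = (s : 𝕜) • A⁻¹ *ᵥ p := by rw [mul_vecMulVec_mul_mulVec, hs]
  have hKY : trace (K * Y * Yᴴ) = star p ⬝ᵥ (A⁻¹ * Y * Yᴴ * A⁻¹) *ᵥ p := by
    simp only [hK_def, Matrix.mul_assoc, trace_mul_vecMulVec_mul]
  have hKz : h ⬝ᵥ (Yᴴ * K) *ᵥ p = s * (h ⬝ᵥ (Yᴴ * A⁻¹) *ᵥ p) := by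
    rw [← mulVec_mulVec, hKp, mulVec_smul, dotProduct_smul, smul_eq_mul, mulVec_mulVec]
  have hKpp : star p ⬝ᵥ K *ᵥ p = (s * s : ℝ) := by
    rw [hKp, dotProduct_smul, hs, smul_eq_mul, RCLike.ofReal_mul]
  have hinv :
      (A + (c : 𝕜) • vecMulVec p (star p))⁻¹ = A⁻¹ - ((c / (1 + c * s) : ℝ) : 𝕜) • K := by
    rw [inv_add_smul_vecMulVec hdet _ _ _ (by rw [hs]; exact_mod_cast hc), hs]
    push_cast
    rfl
  rw [hinv, Matrix.sub_mul, Matrix.sub_mul, trace_sub, map_sub, Matrix.smul_mul, Matrix.smul_mul,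
    trace_smul, smul_eq_mul, RCLike.re_ofReal_mul,
    hA.inv.re_trace_mul_mul_conjTranspose_sub_smul_vecMulVec,
    hK.re_trace_mul_mul_conjTranspose_sub_smul_vecMulVec, hKY, hKz, hKpp, hs]
  simp only [RCLike.re_ofReal_mul, RCLike.ofReal_re]
  have hc' : 1 + s * c ≠ 0 := by rwa [mul_comm]
  field_simp
  ring

end Matrix

theorem stmt_0 (L M : ℕ) (hM : 0 < M)
    (A : Matrix (Fin L) (Fin L) ℂ) (hA : A.PosDef)
    (p : Fin L → ℂ) (Y : Matrix (Fin L) (Fin M) ℂ)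
    (hbar : Fin M → ℂ) (hhbar : ∑ m, Complex.normSq (hbar m) = (M : ℝ))
    (g κ : ℝ) (hg : 0 < g) (hκ : 0 < κ)
    (γ μ α β η : ℝ)
    (hγ : γ = g / (1 + κ))
    (hμ : μ = Real.sqrt (g * κ / (1 + κ)))
    (hα : α = γ * (star p ⬝ᵥ A⁻¹ *ᵥ p).re)
    (hβ : β = γ / M * (star p ⬝ᵥ (A⁻¹ * Y * Yᴴ * A⁻¹) *ᵥ p).re)
    (hη : η = 2 * μ / M * (hbar ⬝ᵥ (Yᴴ * A⁻¹) *ᵥ p).re) :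
    ∀ d : ℝ, 1 + α * d > 0 →
      let B : Matrix (Fin L) (Fin L) ℂ := A + ((d * γ : ℝ) : ℂ) • vecMulVec p (star p)
      let W : Matrix (Fin L) (Fin M) ℂ := Y - ((d * μ : ℝ) : ℂ) • vecMulVec p hbar
      B.PosDef ∧
      B.det.im = 0 ∧ 0 < B.det.re ∧
      A.det.im = 0 ∧ 0 < A.det.re ∧
      (Matrix.trace (B⁻¹ * W * Wᴴ)).im = 0 ∧
      (Matrix.trace (A⁻¹ * Y * Yᴴ)).im = 0 ∧
      (Real.log B.det.re + (1 / M) * (Matrix.trace (B⁻¹ * W * Wᴴ)).re) -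
          (Real.log A.det.re + (1 / M) * (Matrix.trace (A⁻¹ * Y * Yᴴ)).re)
        = Real.log (1 + α * d) + (κ * α * d ^ 2 - (β + η) * d) / (1 + α * d) := by
  intro d hd B W
  have hAdet : IsUnit A.det := A.isUnit_iff_isUnit_det.mp hA.isUnit
  have hcs : 1 + d * γ * (star p ⬝ᵥ A⁻¹ *ᵥ p).re = 1 + α * d := by rw [hα]; ring
  have hBpos : B.PosDef := hA.add_smul_vecMulVec_star p (c := d * γ) (hcs ▸ hd)
  have hdetB : B.det = A.det * ((1 + α * d : ℝ) : ℂ) := by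
    rw [det_add_smul_vecMulVec hAdet, ← hcs,
      ← hA.inv.isHermitian.ofReal_re_star_dotProduct_mulVec_self p]
    push_cast
    rfl
  have hnorm : ∑ j, ‖hbar j‖ ^ 2 = (M : ℝ) := by simpa [Complex.normSq_eq_norm_sq] using hhbar
  have htr := hA.isHermitian.re_trace_inv_add_smul_vecMulVec_star_mul_mul_conjTranspose hAdet p Y
    hbar (d * μ) (hcs ▸ hd.ne')
  simp only [RCLike.re_to_complex, hcs, hnorm] at htr
  change (trace (B⁻¹ * W * Wᴴ)).re = _ at htr
  have hμ2 : μ ^ 2 = κ * γ := by rw [hμ, Real.sq_sqrt (by positivity), hγ]; ring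
  obtain ⟨hAre, hAim⟩ := Complex.lt_def.mp hA.det_pos
  obtain ⟨hBre, hBim⟩ := Complex.lt_def.mp hBpos.det_pos
  refine ⟨hBpos, hBim.symm, hBre, hAim.symm, hAre,
    (Complex.le_def.mp (hBpos.inv.posSemidef.trace_mul_mul_conjTranspose_nonneg W)).2.symm,
    (Complex.le_def.mp (hA.inv.posSemidef.trace_mul_mul_conjTranspose_nonneg Y)).2.symm, ?_⟩
  rw [hdetB, Complex.re_mul_ofReal, Real.log_mul hAre.ne' hd.ne', htr, hβ, hη,
    show κ * α = μ ^ 2 * (star p ⬝ᵥ A⁻¹ *ᵥ p).re by rw [hα, hμ2]; ring]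
  have hM' : (M : ℝ) ≠ 0 := by positivity
  field_simp
  ring
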